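/- arXiv:1404.4231 — 4 statements merged into one kernel-verified Lean document; each statement's English description precedes it below -/
import Mathlib

section
/- Let PSL(2,ℂ) be the quotient of SL(2,ℂ) by its center. For every element g of PSL(2,ℂ) with g² ≠ 1, the centralizer of g in PSL(2,ℂ) is abelian: any two elements of PSL(2,ℂ) that commute with g commute with each other. -/
/-- `PSL(2, ℂ)`: the quotient of `SL(2, ℂ)` by its center. -/
abbrev PSL2C :=
  Matrix.SpecialLinearGroup (Fin 2) ℂ ⧸
    Subgroup.center (Matrix.SpecialLinearGroup (Fin 2) ℂ)

set_option maxHeartbeats 1600000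

open Matrix

/-- Scalar core: commutant of a nonscalar 2×2 matrix is commutative. -/
lemma comm_entries (p q r s a b c d e f g h : ℂ)
    (hns : q ≠ 0 ∨ r ≠ 0 ∨ p ≠ s)
    (hA00 : a * p + b * r = p * a + q * c)
    (hA01 : a * q + b * s = p * b + q * d)
    (hA10 : c * p + d * r = r * a + s * c)
    (hB00 : e * p + f * r = p * e + q * g)
    (hB01 : e * q + f * s = p * f + q * h)
    (hB10 : g * p + h * r = r * e + s * g) :
    a * e + b * g = e * a + f * c ∧ a * f + b * h = e * b + f * d ∧
    c * e + d * g = g * a + h * c ∧ c * f + d * h = g * b + h * d := by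
  by_cases hq : q ≠ 0
  · have hc : c = b * r / q := by field_simp; linear_combination -hA00
    have hd : d = a - b * (p - s) / q := by field_simp; linear_combination -hA01
    have hg : g = f * r / q := by field_simp; linear_combination -hB00
    have hh : h = e - f * (p - s) / q := by field_simp; linear_combination -hB01
    subst hc hd hg hh
    refine ⟨?_, ?_, ?_, ?_⟩ <;> field_simp <;> ring
  · push_neg at hq
    subst hq
    by_cases hr : r ≠ 0
    · have hb : b = 0 := by
        rcases mul_eq_zero.mp (show b * r = 0 by linear_combination hA00) with h1 | h1
        · exact h1
        · exact absurd h1 hr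
      have ha : a = d + c * (p - s) / r := by field_simp; linear_combination -hA10
      have hf : f = 0 := by
        rcases mul_eq_zero.mp (show f * r = 0 by linear_combination hB00) with h1 | h1
        · exact h1
        · exact absurd h1 hr
      have he : e = h + g * (p - s) / r := by field_simp; linear_combination -hB10
      subst hb ha hf he
      refine ⟨?_, ?_, ?_, ?_⟩ <;> field_simp <;> ring
    · push_neg at hr
      subst hr
      have hps : p - s ≠ 0 := by
        rcases hns with h1 | h1 | h1
        · exact absurd rfl h1
        · exact absurd rfl h1
        · exact sub_ne_zero.mpr h1
      have hb : b = 0 := by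
        rcases mul_eq_zero.mp (show b * (p - s) = 0 by
          linear_combination -hA01) with h1 | h1
        · exact h1
        · exact absurd h1 hps
      have hc : c = 0 := by
        rcases mul_eq_zero.mp (show c * (p - s) = 0 by
          linear_combination hA10) with h1 | h1
        · exact h1
        · exact absurd h1 hps
      have hf : f = 0 := by
        rcases mul_eq_zero.mp (show f * (p - s) = 0 by
          linear_combination -hB01) with h1 | h1
        · exact h1
        · exact absurd h1 hps
      have hg : g = 0 := by
        rcases mul_eq_zero.mp (show g * (p - s) = 0 by
          linear_combination hB10) with h1 | h1
        · exact h1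
        · exact absurd h1 hps
      subst hb hc hf hg
      refine ⟨by ring, by ring, by ring, by ring⟩

lemma sq_eq_neg_one_of_anticomm (G A : Matrix (Fin 2) (Fin 2) ℂ)
    (hdG : G.det = 1) (hdA : A.det = 1)
    (h : A * G = -(G * A)) : G * G = -1 := by
  have hAu : IsUnit A.det := by rw [hdA]; exact isUnit_one
  have htr : G.trace = -G.trace := by
    calc G.trace = (A⁻¹ * (A * G)).trace := by
          rw [← Matrix.mul_assoc, Matrix.nonsing_inv_mul A hAu, Matrix.one_mul]
      _ = -((G * A) * A⁻¹).trace := by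
          rw [h, Matrix.mul_neg, Matrix.trace_neg, Matrix.trace_mul_comm]
      _ = -G.trace := by
          rw [Matrix.mul_assoc, Matrix.mul_nonsing_inv A hAu, Matrix.mul_one]
  have htr0 : G 0 0 + G 1 1 = 0 := by
    have h0 : G.trace = 0 := by linear_combination htr / 2
    simpa [Matrix.trace_fin_two] using h0
  have hdet : G 0 0 * G 1 1 - G 0 1 * G 1 0 = 1 := by
    rw [← Matrix.det_fin_two]; exact hdG
  ext i j
  fin_cases i <;> fin_cases j <;>
    simp [Matrix.mul_apply, Fin.sum_univ_two, Matrix.one_apply]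
  · linear_combination G 0 0 * htr0 - hdet
  · linear_combination G 0 1 * htr0
  · linear_combination G 1 0 * htr0
  · linear_combination G 1 1 * htr0 - hdet

lemma comm_of_comm_nonscalar (G A B : Matrix (Fin 2) (Fin 2) ℂ)
    (hns : G 0 1 ≠ 0 ∨ G 1 0 ≠ 0 ∨ G 0 0 ≠ G 1 1)
    (hA : A * G = G * A) (hB : B * G = G * B) : A * B = B * A := by
  have hA00 := congrFun (congrFun hA 0) 0
  have hA01 := congrFun (congrFun hA 0) 1
  have hA10 := congrFun (congrFun hA 1) 0
  have hB00 := congrFun (congrFun hB 0) 0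
  have hB01 := congrFun (congrFun hB 0) 1
  have hB10 := congrFun (congrFun hB 1) 0
  simp only [Matrix.mul_apply, Fin.sum_univ_two] at hA00 hA01 hA10 hB00 hB01 hB10
  obtain ⟨k1, k2, k3, k4⟩ := comm_entries (G 0 0) (G 0 1) (G 1 0) (G 1 1)
    (A 0 0) (A 0 1) (A 1 0) (A 1 1) (B 0 0) (B 0 1) (B 1 0) (B 1 1)
    hns hA00 hA01 hA10 hB00 hB01 hB10
  ext i j
  fin_cases i <;> fin_cases j <;>
    simp only [Matrix.mul_apply, Fin.sum_univ_two]
  exacts [k1, k2, k3, k4]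

open Matrix.SpecialLinearGroup in
lemma comm_or_anticomm (G X : Matrix.SpecialLinearGroup (Fin 2) ℂ)
    (h : (X * G)⁻¹ * (G * X) ∈ Subgroup.center (Matrix.SpecialLinearGroup (Fin 2) ℂ)) :
    (X : Matrix (Fin 2) (Fin 2) ℂ) * G = G * X ∨
    (X : Matrix (Fin 2) (Fin 2) ℂ) * G = -((G : Matrix (Fin 2) (Fin 2) ℂ) * X) := by
  obtain ⟨r, hr2, hr⟩ := Matrix.SpecialLinearGroup.mem_center_iff.mp h
  simp only [Fintype.card_fin] at hr2
  have hGX : (G * X : Matrix.SpecialLinearGroup (Fin 2) ℂ)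
      = (X * G) * ((X * G)⁻¹ * (G * X)) := by group
  have hmat : (G : Matrix (Fin 2) (Fin 2) ℂ) * X
      = ((X : Matrix (Fin 2) (Fin 2) ℂ) * G) * (Matrix.scalar (Fin 2) r) := by
    calc (G : Matrix (Fin 2) (Fin 2) ℂ) * X
        = ((G * X : Matrix.SpecialLinearGroup (Fin 2) ℂ) : Matrix (Fin 2) (Fin 2) ℂ) := rfl
      _ = (((X * G) * ((X * G)⁻¹ * (G * X)) : Matrix.SpecialLinearGroup (Fin 2) ℂ) :
            Matrix (Fin 2) (Fin 2) ℂ) := by rw [← hGX]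
      _ = ((X : Matrix (Fin 2) (Fin 2) ℂ) * G) * (Matrix.scalar (Fin 2) r) := by
          rw [Matrix.SpecialLinearGroup.coe_mul, hr]; rfl
  have hrr : r = 1 ∨ r = -1 := by
    have : (r - 1) * (r + 1) = 0 := by linear_combination hr2
    rcases mul_eq_zero.mp this with h1 | h1
    · left; linear_combination h1
    · right; linear_combination h1
  rcases hrr with rfl | rfl
  · left
    rw [hmat, Matrix.scalar_apply, ← Matrix.smul_one_eq_diagonal]
    simp
  · right
    rw [hmat, Matrix.scalar_apply, ← Matrix.smul_one_eq_diagonal]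
    simp


/-- The centralizer of any element `g` of `PSL(2, ℂ)` with `g² ≠ 1` is
abelian. -/
theorem PSL2C_centralizer_abelian (g : PSL2C) (hg : g ^ 2 ≠ 1)
    (a b : PSL2C) (ha : a * g = g * a) (hb : b * g = g * b) :
    a * b = b * a := by
  obtain ⟨G, rfl⟩ := QuotientGroup.mk_surjective g
  obtain ⟨A, rfl⟩ := QuotientGroup.mk_surjective a
  obtain ⟨B, rfl⟩ := QuotientGroup.mk_surjective b
  rw [← QuotientGroup.mk_mul, ← QuotientGroup.mk_mul] at ha hb ⊢
  rw [← QuotientGroup.mk_pow] at hg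
  have hgc : G ^ 2 ∉ Subgroup.center (Matrix.SpecialLinearGroup (Fin 2) ℂ) := by
    intro hmem
    exact hg ((QuotientGroup.eq_one_iff _).mpr hmem)
  have hca := comm_or_anticomm G A (QuotientGroup.eq.mp ha)
  have hcb := comm_or_anticomm G B (QuotientGroup.eq.mp hb)
  -- rule out anticommuting cases
  have hdG : (G : Matrix (Fin 2) (Fin 2) ℂ).det = 1 := G.property
  have hno : ∀ X : Matrix.SpecialLinearGroup (Fin 2) ℂ,
      (X : Matrix (Fin 2) (Fin 2) ℂ) * G ≠ -((G : Matrix (Fin 2) (Fin 2) ℂ) * X) := by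
    intro X hX
    have hsq := sq_eq_neg_one_of_anticomm G X hdG X.property hX
    apply hgc
    refine Matrix.SpecialLinearGroup.mem_center_iff.mpr ⟨-1, by norm_num, ?_⟩
    have : ((G ^ 2 : Matrix.SpecialLinearGroup (Fin 2) ℂ) : Matrix (Fin 2) (Fin 2) ℂ)
        = (G : Matrix (Fin 2) (Fin 2) ℂ) * G := by rw [pow_two]; rfl
    rw [this, hsq, Matrix.scalar_apply, ← Matrix.smul_one_eq_diagonal]
    simp
  rcases hca with hca | hca; swap; · exact absurd hca (hno A)
  rcases hcb with hcb | hcb; swap; · exact absurd hcb (hno B)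
  -- G is not scalar
  have hns : (G : Matrix (Fin 2) (Fin 2) ℂ) 0 1 ≠ 0 ∨
      (G : Matrix (Fin 2) (Fin 2) ℂ) 1 0 ≠ 0 ∨
      (G : Matrix (Fin 2) (Fin 2) ℂ) 0 0 ≠ (G : Matrix (Fin 2) (Fin 2) ℂ) 1 1 := by
    by_contra hcon
    push_neg at hcon
    obtain ⟨h01, h10, h00⟩ := hcon
    apply hgc
    have hdet2 : (G : Matrix (Fin 2) (Fin 2) ℂ) 0 0 * (G : Matrix (Fin 2) (Fin 2) ℂ) 1 1
        - (G : Matrix (Fin 2) (Fin 2) ℂ) 0 1 * (G : Matrix (Fin 2) (Fin 2) ℂ) 1 0 = 1 := by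
      rw [← Matrix.det_fin_two]; exact hdG
    have hq2 : (G : Matrix (Fin 2) (Fin 2) ℂ) 1 1 * (G : Matrix (Fin 2) (Fin 2) ℂ) 1 1 = 1 := by
      linear_combination hdet2 - (G : Matrix (Fin 2) (Fin 2) ℂ) 1 1 * h00
        + (G : Matrix (Fin 2) (Fin 2) ℂ) 1 0 * h01
    refine Matrix.SpecialLinearGroup.mem_center_iff.mpr ⟨1, one_pow 2, ?_⟩
    have : ((G ^ 2 : Matrix.SpecialLinearGroup (Fin 2) ℂ) : Matrix (Fin 2) (Fin 2) ℂ)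
        = (G : Matrix (Fin 2) (Fin 2) ℂ) * G := by rw [pow_two]; rfl
    rw [this, Matrix.scalar_apply, ← Matrix.smul_one_eq_diagonal, one_smul]
    ext i j
    fin_cases i <;> fin_cases j <;>
      simp [Matrix.mul_apply, Fin.sum_univ_two, Matrix.one_apply, h01, h10, h00] <;>
      linear_combination -hq2
  have := comm_of_comm_nonscalar G A B hns hca hcb
  congr 1
  exact Subtype.ext this
end

section
/- Let A, B ∈ SL(2,ℂ) with A² ≠ I, A² ≠ −I, B ≠ I and B ≠ −I. Then the images of A and B in PSL(2,ℂ) commute (equivalently, AB = BA or AB = −BA) if and only if A and B have the same eigenvectors, i.e., for every nonzero v ∈ ℂ², there exists a scalar c with Av = cv if and only if there exists a scalar c with Bv = cv. -/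
open Matrix

private lemma mulVec_apply' (M : Matrix (Fin 2) (Fin 2) ℂ) (v : Fin 2 → ℂ) (i : Fin 2) :
    M.mulVec v i = M i 0 * v 0 + M i 1 * v 1 := by
  simp [Matrix.mulVec, dotProduct, Fin.sum_univ_two]

private lemma vec_ne_zero {v : Fin 2 → ℂ} (hv : v ≠ 0) : v 0 ≠ 0 ∨ v 1 ≠ 0 := by
  by_contra h
  push_neg at h
  exact hv (by ext i; fin_cases i <;> simp [h.1, h.2])

/-- parallel criterion -/
private lemma parallel_of_cross {v w : Fin 2 → ℂ} (hv : v ≠ 0)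
    (h : w 0 * v 1 = w 1 * v 0) : ∃ c : ℂ, w = c • v := by
  rcases vec_ne_zero hv with h0 | h1
  · refine ⟨w 0 / v 0, ?_⟩
    ext i; fin_cases i
    · simp; field_simp
    · simp; field_simp; linear_combination -h
  · refine ⟨w 1 / v 1, ?_⟩
    ext i; fin_cases i
    · simp; field_simp; linear_combination h
    · simp; field_simp

/-- equal scalars acting on a nonzero vector -/
private lemma smul_cancel {c d : ℂ} {w : Fin 2 → ℂ} (hw : w ≠ 0)
    (h : c • w = d • w) : c = d := by
  rcases vec_ne_zero hw with h0 | h0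
  · have := congrFun h 0
    simp only [Pi.smul_apply, smul_eq_mul] at this
    exact mul_right_cancel₀ h0 this
  · have := congrFun h 1
    simp only [Pi.smul_apply, smul_eq_mul] at this
    exact mul_right_cancel₀ h0 this

/-- matrices agreeing on a basis are equal -/
private lemma eq_of_basis {v w : Fin 2 → ℂ} (hD : v 0 * w 1 - v 1 * w 0 ≠ 0)
    {M N : Matrix (Fin 2) (Fin 2) ℂ}
    (h1 : M.mulVec v = N.mulVec v) (h2 : M.mulVec w = N.mulVec w) : M = N := by
  ext i j
  have e1 : M i 0 * v 0 + M i 1 * v 1 = N i 0 * v 0 + N i 1 * v 1 := by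
    rw [← mulVec_apply', ← mulVec_apply', h1]
  have e2 : M i 0 * w 0 + M i 1 * w 1 = N i 0 * w 0 + N i 1 * w 1 := by
    rw [← mulVec_apply', ← mulVec_apply', h2]
  fin_cases j
  · have : (M i 0 - N i 0) * (v 0 * w 1 - v 1 * w 0) = 0 := by
      linear_combination w 1 * e1 - v 1 * e2
    simpa [sub_eq_zero, hD] using mul_eq_zero.mp this
  · have : (M i 1 - N i 1) * (v 0 * w 1 - v 1 * w 0) = 0 := by
      linear_combination v 0 * e2 - w 0 * e1
    simpa [sub_eq_zero, hD] using mul_eq_zero.mp this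

/-- scalar criterion -/
private lemma eq_smul_one {v w : Fin 2 → ℂ} (hD : v 0 * w 1 - v 1 * w 0 ≠ 0)
    {M : Matrix (Fin 2) (Fin 2) ℂ} {c : ℂ}
    (h1 : M.mulVec v = c • v) (h2 : M.mulVec w = c • w) :
    M = c • (1 : Matrix (Fin 2) (Fin 2) ℂ) := by
  refine eq_of_basis hD ?_ ?_ <;> rw [smul_mulVec, one_mulVec]
  exacts [h1, h2]

/-- square of a scalar matrix -/
private lemma smul_one_sq (c : ℂ) :
    (c • (1 : Matrix (Fin 2) (Fin 2) ℂ)) * (c • 1) = (c * c) • 1 := by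
  rw [smul_mul_assoc, mul_smul_comm, smul_smul, one_mul]

/-- Cayley-Hamilton 2x2 -/
private lemma sq_eq_CH (M : Matrix (Fin 2) (Fin 2) ℂ) :
    M * M = M.trace • M - M.det • (1 : Matrix (Fin 2) (Fin 2) ℂ) := by
  ext i j
  fin_cases i <;> fin_cases j <;>
    simp [Matrix.mul_apply, Matrix.trace_fin_two, Matrix.det_fin_two, Fin.sum_univ_two,
      Matrix.one_apply] <;> ring

/-- kernel vector of singular matrix -/
private lemma exists_kernel {M : Matrix (Fin 2) (Fin 2) ℂ} (h : M.det = 0) :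
    ∃ v : Fin 2 → ℂ, v ≠ 0 ∧ M.mulVec v = 0 := by
  rw [Matrix.det_fin_two] at h
  by_cases h0 : M 0 0 = 0 ∧ M 0 1 = 0
  · by_cases h1 : M 1 0 = 0 ∧ M 1 1 = 0
    · exact ⟨![1, 0], by intro hz; simpa using congrFun hz 0, by
        ext i; fin_cases i <;> simp [mulVec_apply', h0.1, h0.2, h1.1, h1.2]⟩
    · refine ⟨![M 1 1, -(M 1 0)], ?_, ?_⟩
      · intro hz
        apply h1
        constructor
        · simpa using neg_eq_zero.mp (congrFun hz 1)
        · simpa using congrFun hz 0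
      · ext i; fin_cases i <;> simp [mulVec_apply', h0.1, h0.2] <;> ring
  · refine ⟨![M 0 1, -(M 0 0)], ?_, ?_⟩
    · intro hz
      apply h0
      constructor
      · simpa using neg_eq_zero.mp (congrFun hz 1)
      · simpa using congrFun hz 0
    · ext i; fin_cases i
      · simp [mulVec_apply']; ring
      · simp [mulVec_apply']; linear_combination -h

/-- det zero from kernel -/
private lemma det_zero_of_kernel {M : Matrix (Fin 2) (Fin 2) ℂ} {v : Fin 2 → ℂ}
    (hv : v ≠ 0) (h : M.mulVec v = 0) : M.det = 0 := by
  have e0 : M 0 0 * v 0 + M 0 1 * v 1 = 0 := by rw [← mulVec_apply', h]; rfl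
  have e1 : M 1 0 * v 0 + M 1 1 * v 1 = 0 := by rw [← mulVec_apply', h]; rfl
  rw [Matrix.det_fin_two]
  rcases vec_ne_zero hv with h0 | h1
  · have : (M 0 0 * M 1 1 - M 0 1 * M 1 0) * v 0 = 0 := by
      linear_combination M 1 1 * e0 - M 0 1 * e1
    simpa [h0, sub_eq_zero] using mul_eq_zero.mp this
  · have : (M 0 0 * M 1 1 - M 0 1 * M 1 0) * v 1 = 0 := by
      linear_combination M 0 0 * e1 - M 1 0 * e0
    simpa [h1, sub_eq_zero] using mul_eq_zero.mp this

/-- det of a - c•1 -/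
private lemma det_sub_smul (a : Matrix (Fin 2) (Fin 2) ℂ) (c : ℂ) :
    (a - c • 1).det = c ^ 2 - a.trace * c + a.det := by
  simp [Matrix.det_fin_two, Matrix.trace_fin_two, Matrix.one_apply, Matrix.sub_apply,
    Matrix.smul_apply]
  ring

/-- root of char poly from eigenvector -/
private lemma char_root {a : Matrix (Fin 2) (Fin 2) ℂ} {v : Fin 2 → ℂ} {lam : ℂ}
    (hdet : a.det = 1) (hv : v ≠ 0) (h : a.mulVec v = lam • v) :
    lam ^ 2 - a.trace * lam + 1 = 0 := by
  have hk : (a - lam • 1).mulVec v = 0 := by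
    rw [Matrix.sub_mulVec, Matrix.smul_mulVec, Matrix.one_mulVec, h, sub_self]
  have hd := det_zero_of_kernel hv hk
  rw [det_sub_smul, hdet] at hd
  exact hd

/-- eigenvector for a given root of the char poly -/
private lemma eigen_of_root {a : Matrix (Fin 2) (Fin 2) ℂ} {c : ℂ}
    (hdet : a.det = 1) (hc : c ^ 2 - a.trace * c + 1 = 0) :
    ∃ v : Fin 2 → ℂ, v ≠ 0 ∧ a.mulVec v = c • v := by
  have hroot : (a - c • 1).det = 0 := by rw [det_sub_smul, hdet]; exact hc
  obtain ⟨v, hv, hker⟩ := exists_kernel hroot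
  refine ⟨v, hv, ?_⟩
  rwa [Matrix.sub_mulVec, Matrix.smul_mulVec, Matrix.one_mulVec, sub_eq_zero] at hker

/-- existence of an eigenvector over ℂ -/
private lemma exists_eigen {a : Matrix (Fin 2) (Fin 2) ℂ} (hdet : a.det = 1) :
    ∃ (lam : ℂ) (v : Fin 2 → ℂ), v ≠ 0 ∧ a.mulVec v = lam • v := by
  obtain ⟨s, hs⟩ := IsAlgClosed.exists_pow_nat_eq (a.trace ^ 2 - 4) (n := 2) (by norm_num)
  exact ⟨(a.trace + s) / 2, eigen_of_root hdet (by linear_combination hs / 4)⟩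

/-- complement of a vector to a basis -/
private lemma exists_compl {v : Fin 2 → ℂ} (hv : v ≠ 0) :
    ∃ w : Fin 2 → ℂ, v 0 * w 1 - v 1 * w 0 ≠ 0 := by
  rcases vec_ne_zero hv with h0 | h1
  · exact ⟨![0, 1], by simpa using h0⟩
  · exact ⟨![1, 0], by simpa using h1⟩

/-- Two elements of `SL(2, ℂ)` (with `A² ≠ ±I`, `B ≠ ±I`) commute in
`PSL(2, ℂ)` (i.e. `AB = BA` or `AB = -BA`) if and only if they have the same
eigenvectors in `ℂ²`. -/
theorem SL2C_commute_in_PSL_iff_same_eigenvectors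
    (A B : Matrix.SpecialLinearGroup (Fin 2) ℂ)
    (hA1 : (A : Matrix (Fin 2) (Fin 2) ℂ) ^ 2 ≠ 1)
    (hA2 : (A : Matrix (Fin 2) (Fin 2) ℂ) ^ 2 ≠ -1)
    (hB1 : (B : Matrix (Fin 2) (Fin 2) ℂ) ≠ 1)
    (hB2 : (B : Matrix (Fin 2) (Fin 2) ℂ) ≠ -1) :
    ((A : Matrix (Fin 2) (Fin 2) ℂ) * B = (B : Matrix (Fin 2) (Fin 2) ℂ) * A ∨
      (A : Matrix (Fin 2) (Fin 2) ℂ) * B = -((B : Matrix (Fin 2) (Fin 2) ℂ) * A)) ↔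
    (∀ v : Fin 2 → ℂ, v ≠ 0 →
      ((∃ c : ℂ, (A : Matrix (Fin 2) (Fin 2) ℂ).mulVec v = c • v) ↔
        (∃ c : ℂ, (B : Matrix (Fin 2) (Fin 2) ℂ).mulVec v = c • v))) := by
  set a := (A : Matrix (Fin 2) (Fin 2) ℂ) with ha
  set b := (B : Matrix (Fin 2) (Fin 2) ℂ) with hb
  have hdeta : a.det = 1 := A.prop
  have hdetb : b.det = 1 := B.prop
  constructor
  · rintro (hc | hanti)
    · -- genuinely commuting case
      intro v hv
      constructor
      · rintro ⟨c, hav⟩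
        set w := b.mulVec v with hw
        by_cases hpar : w 0 * v 1 = w 1 * v 0
        · exact parallel_of_cross hv hpar
        · exfalso
          have haw : a.mulVec w = c • w := by
            rw [hw, Matrix.mulVec_mulVec, hc, ← Matrix.mulVec_mulVec, hav,
              Matrix.mulVec_smul]
          have hD : v 0 * w 1 - v 1 * w 0 ≠ 0 := by
            intro h; exact hpar (by linear_combination -h)
          have hscal : a = c • 1 := eq_smul_one hD hav haw
          have hc2 : c = 1 ∨ c = -1 := by
            have hd := hdeta
            rw [hscal] at hd
            simpa [Matrix.det_fin_two, Matrix.smul_apply, Matrix.one_apply,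
              mul_self_eq_one_iff] using hd
          apply hA1
          rw [pow_two, hscal, smul_one_sq]
          rcases hc2 with rfl | rfl <;> norm_num
      · rintro ⟨c, hbv⟩
        set w := a.mulVec v with hw
        by_cases hpar : w 0 * v 1 = w 1 * v 0
        · exact parallel_of_cross hv hpar
        · exfalso
          have hbw : b.mulVec w = c • w := by
            rw [hw, Matrix.mulVec_mulVec, ← hc, ← Matrix.mulVec_mulVec, hbv,
              Matrix.mulVec_smul]
          have hD : v 0 * w 1 - v 1 * w 0 ≠ 0 := by
            intro h; exact hpar (by linear_combination -h)
          have hscal : b = c • 1 := eq_smul_one hD hbv hbw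
          have hc2 : c = 1 ∨ c = -1 := by
            have hd := hdetb
            rw [hscal] at hd
            simpa [Matrix.det_fin_two, Matrix.smul_apply, Matrix.one_apply,
              mul_self_eq_one_iff] using hd
          rcases hc2 with rfl | rfl
          · exact hB1 (by simpa using hscal)
          · exact hB2 (by rw [hscal]; simp)
    · -- anticommuting case is impossible
      exfalso
      have htr : a.trace = 0 := by
        have hinv : b * (B⁻¹ : Matrix.SpecialLinearGroup (Fin 2) ℂ) = 1 := by
          rw [hb, ← Matrix.SpecialLinearGroup.coe_mul, mul_inv_cancel,
            Matrix.SpecialLinearGroup.coe_one]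
        have hinv' : ((B⁻¹ : Matrix.SpecialLinearGroup (Fin 2) ℂ) : Matrix (Fin 2) (Fin 2) ℂ)
            * b = 1 := by
          rw [hb, ← Matrix.SpecialLinearGroup.coe_mul, inv_mul_cancel,
            Matrix.SpecialLinearGroup.coe_one]
        have h1 : a = -(b * a * (B⁻¹ : Matrix.SpecialLinearGroup (Fin 2) ℂ)) := by
          calc a = a * (b * (B⁻¹ : Matrix.SpecialLinearGroup (Fin 2) ℂ)) := by
                  rw [hinv, mul_one]
            _ = (a * b) * (B⁻¹ : Matrix.SpecialLinearGroup (Fin 2) ℂ) := by rw [mul_assoc]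
            _ = -(b * a * (B⁻¹ : Matrix.SpecialLinearGroup (Fin 2) ℂ)) := by
                  rw [hanti]; simp
        have h2 : a.trace = -(a.trace) := by
          nth_rewrite 1 [h1]
          rw [Matrix.trace_neg, neg_inj, Matrix.trace_mul_cycle]
          rw [hinv', one_mul]
        linear_combination h2 / 2
      apply hA2
      rw [pow_two, sq_eq_CH, htr, hdeta, zero_smul, one_smul, zero_sub]
  · -- converse: same eigenvectors implies commuting
    intro H
    left
    obtain ⟨lam, v, hv, hav⟩ := exists_eigen hdeta
    obtain ⟨mu, hbv⟩ := (H v hv).mp ⟨lam, hav⟩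
    have hRa : lam ^ 2 - a.trace * lam + 1 = 0 := char_root hdeta hv hav
    by_cases hdisc : a.trace = 2 * lam
    · -- repeated eigenvalue case
      have hlam2 : lam ^ 2 = 1 := by
        rw [hdisc] at hRa; linear_combination -hRa
      have hRb : mu ^ 2 - b.trace * mu + 1 = 0 := char_root hdetb hv hbv
      have hdiscb : b.trace = 2 * mu := by
        by_contra hne
        have hmune : b.trace - mu ≠ mu := fun h => hne (by linear_combination h)
        have hRb' : (b.trace - mu) ^ 2 - b.trace * (b.trace - mu) + 1 = 0 := by
          linear_combination hRb
        obtain ⟨w, hw, hbw⟩ := eigen_of_root hdetb hRb'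
        obtain ⟨kap, haw⟩ := (H w hw).mpr ⟨b.trace - mu, hbw⟩
        have hRk : kap ^ 2 - a.trace * kap + 1 = 0 := char_root hdeta hw haw
        have hkap : kap = lam := by
          have : (kap - lam) ^ 2 = 0 := by
            rw [hdisc] at hRk
            linear_combination hRk + hlam2
          exact sub_eq_zero.mp (pow_eq_zero_iff (n := 2) (by norm_num) |>.mp this)
        by_cases hpar : w 0 * v 1 = w 1 * v 0
        · obtain ⟨s, rfl⟩ := parallel_of_cross hv hpar
          have hs : s ≠ 0 := fun h => hw (by rw [h, zero_smul])
          have heq : (b.trace - mu) • (s • v) = mu • (s • v) := by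
            rw [← hbw, Matrix.mulVec_smul, hbv, smul_comm]
          exact hmune (smul_cancel (smul_ne_zero hs hv) heq)
        · have hD : v 0 * w 1 - v 1 * w 0 ≠ 0 := by
            intro h; exact hpar (by linear_combination -h)
          rw [hkap] at haw
          have hscal : a = lam • 1 := eq_smul_one hD hav haw
          apply hA1
          rw [pow_two, hscal, smul_one_sq, ← pow_two, hlam2, one_smul]
      have hmu2 : mu ^ 2 = 1 := by
        rw [hdiscb] at hRb; linear_combination -hRb
      -- nilpotent parts
      set N := a - lam • (1 : Matrix (Fin 2) (Fin 2) ℂ) with hN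
      set M := b - mu • (1 : Matrix (Fin 2) (Fin 2) ℂ) with hM
      have hNsq : N * N = 0 := by
        rw [hN]
        have hex : (a - lam • 1) * (a - lam • 1) =
            a * a - (2 * lam) • a + (lam * lam) • (1 : Matrix (Fin 2) (Fin 2) ℂ) := by
          simp only [sub_mul, mul_sub, smul_mul_assoc, mul_smul_comm, smul_smul,
            one_mul, mul_one]
          module
        rw [hex, sq_eq_CH, hdeta, hdisc, ← pow_two, hlam2]
        module
      have hMsq : M * M = 0 := by
        rw [hM]
        have hex : (b - mu • 1) * (b - mu • 1) =
            b * b - (2 * mu) • b + (mu * mu) • (1 : Matrix (Fin 2) (Fin 2) ℂ) := by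
          simp only [sub_mul, mul_sub, smul_mul_assoc, mul_smul_comm, smul_smul,
            one_mul, mul_one]
          module
        rw [hex, sq_eq_CH, hdetb, hdiscb, ← pow_two, hmu2]
        module
      have hNv : N.mulVec v = 0 := by
        rw [hN, Matrix.sub_mulVec, Matrix.smul_mulVec, Matrix.one_mulVec, hav, sub_self]
      have hMv : M.mulVec v = 0 := by
        rw [hM, Matrix.sub_mulVec, Matrix.smul_mulVec, Matrix.one_mulVec, hbv, sub_self]
      have hNne : N ≠ 0 := by
        intro h
        rw [hN] at h
        have hsc : a = lam • 1 := sub_eq_zero.mp h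
        apply hA1
        rw [pow_two, hsc, smul_one_sq, ← pow_two, hlam2, one_smul]
      have hMne : M ≠ 0 := by
        intro h
        rw [hM] at h
        have hsc : b = mu • 1 := sub_eq_zero.mp h
        have : mu = 1 ∨ mu = -1 := by
          have h' : (mu - 1) * (mu + 1) = 0 := by linear_combination hmu2
          rcases mul_eq_zero.mp h' with h'' | h''
          · exact Or.inl (by linear_combination h'')
          · exact Or.inr (by linear_combination h'')
        rcases this with rfl | rfl
        · exact hB1 (by simpa using hsc)
        · exact hB2 (by rw [hsc]; simp)
      have himageN : ∀ u : Fin 2 → ℂ, ∃ s : ℂ, N.mulVec u = s • v := by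
        intro u
        by_cases hpar : (N.mulVec u) 0 * v 1 = (N.mulVec u) 1 * v 0
        · exact parallel_of_cross hv hpar
        · exfalso
          have hD : v 0 * (N.mulVec u) 1 - v 1 * (N.mulVec u) 0 ≠ 0 := by
            intro h; exact hpar (by linear_combination -h)
          have hNNu : N.mulVec (N.mulVec u) = (0 : ℂ) • (N.mulVec u) := by
            rw [Matrix.mulVec_mulVec, hNsq, zero_smul, Matrix.zero_mulVec]
          have hNv' : N.mulVec v = (0 : ℂ) • v := by rw [hNv, zero_smul]
          have := eq_smul_one hD hNv' hNNu
          rw [zero_smul] at this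
          exact hNne this
      have himageM : ∀ u : Fin 2 → ℂ, ∃ s : ℂ, M.mulVec u = s • v := by
        intro u
        by_cases hpar : (M.mulVec u) 0 * v 1 = (M.mulVec u) 1 * v 0
        · exact parallel_of_cross hv hpar
        · exfalso
          have hD : v 0 * (M.mulVec u) 1 - v 1 * (M.mulVec u) 0 ≠ 0 := by
            intro h; exact hpar (by linear_combination -h)
          have hMMu : M.mulVec (M.mulVec u) = (0 : ℂ) • (M.mulVec u) := by
            rw [Matrix.mulVec_mulVec, hMsq, zero_smul, Matrix.zero_mulVec]
          have hMv' : M.mulVec v = (0 : ℂ) • v := by rw [hMv, zero_smul]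
          have := eq_smul_one hD hMv' hMMu
          rw [zero_smul] at this
          exact hMne this
      have hNM : N * M = M * N := by
        obtain ⟨w, hD⟩ := exists_compl hv
        refine eq_of_basis hD ?_ ?_
        · rw [← Matrix.mulVec_mulVec, ← Matrix.mulVec_mulVec, hMv, hNv,
            Matrix.mulVec_zero, Matrix.mulVec_zero]
        · obtain ⟨s, hs⟩ := himageM w
          obtain ⟨t, ht⟩ := himageN w
          rw [← Matrix.mulVec_mulVec, ← Matrix.mulVec_mulVec, hs, ht,
            Matrix.mulVec_smul, Matrix.mulVec_smul, hMv, hNv, smul_zero, smul_zero]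
      have hae : a = N + lam • 1 := by rw [hN]; abel
      have hbe : b = M + mu • 1 := by rw [hM]; abel
      rw [hae, hbe]
      simp only [add_mul, mul_add, smul_mul_assoc, mul_smul_comm, smul_smul,
        one_mul, mul_one]
      rw [hNM]
      module
    · -- distinct eigenvalues case
      have hne : a.trace - lam ≠ lam := fun h => hdisc (by linear_combination h)
      have hRa' : (a.trace - lam) ^ 2 - a.trace * (a.trace - lam) + 1 = 0 := by
        linear_combination hRa
      obtain ⟨w, hw, haw⟩ := eigen_of_root hdeta hRa'
      obtain ⟨nu, hbw⟩ := (H w hw).mp ⟨a.trace - lam, haw⟩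
      have hD : v 0 * w 1 - v 1 * w 0 ≠ 0 := by
        intro h
        have hpar : w 0 * v 1 = w 1 * v 0 := by linear_combination -h
        obtain ⟨s, rfl⟩ := parallel_of_cross hv hpar
        have hs : s ≠ 0 := fun h' => hw (by rw [h', zero_smul])
        have heq : (a.trace - lam) • (s • v) = lam • (s • v) := by
          rw [← haw, Matrix.mulVec_smul, hav, smul_comm]
        exact hne (smul_cancel (smul_ne_zero hs hv) heq)
      refine eq_of_basis hD ?_ ?_
      · rw [← Matrix.mulVec_mulVec, ← Matrix.mulVec_mulVec, hbv, hav,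
          Matrix.mulVec_smul, Matrix.mulVec_smul, hav, hbv, smul_comm]
      · rw [← Matrix.mulVec_mulVec, ← Matrix.mulVec_mulVec, hbw, haw,
          Matrix.mulVec_smul, Matrix.mulVec_smul, haw, hbw, smul_comm]
end

section
/- Let k be a natural number with k ≤ 8, let a > 0 be a real number, and let b₁, …, b_k > 0 be real numbers. Then (9 − k)·(a² − Σᵢ bᵢ²) < 4·(3a − Σᵢ bᵢ)². -/
/-- For `k ≤ 8`, `a > 0` and `b₁, …, b_k > ₀`, the inequality
`(9 - k)(a² - ∑ bᵢ²) < 4(3a - ∑ bᵢ)²` holds. -/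
theorem del_pezzo_inequality (k : ℕ) (hk : k ≤ 8) (a : ℝ) (ha : 0 < a)
    (b : Fin k → ℝ) (hb : ∀ i, 0 < b i) :
    ((9 : ℝ) - k) * (a ^ 2 - ∑ i, (b i) ^ 2) <
      4 * (3 * a - ∑ i, b i) ^ 2 := by
  rcases Nat.eq_zero_or_pos k with rfl | hk1
  · simp; nlinarith [sq_nonneg a]
  · set S := ∑ i, b i with hS
    set Q := ∑ i, (b i) ^ 2 with hQ
    have hCS : S ^ 2 ≤ (k : ℝ) * Q := by
      have := sq_sum_le_card_mul_sum_sq (s := (Finset.univ : Finset (Fin k))) (f := b)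
      simpa using this
    have hSpos : 0 < S := Finset.sum_pos (fun i _ => hb i) ⟨⟨0, hk1⟩, Finset.mem_univ _⟩
    have hkR : (1 : ℝ) ≤ k := by exact_mod_cast hk1
    have hkR8 : (k : ℝ) ≤ 8 := by exact_mod_cast hk
    have hkpos : (0:ℝ) < k := by exact_mod_cast hk1
    have hsq : (1:ℝ) ≤ ((k:ℝ) - 9)^2 := by nlinarith
    have h1 : ((9:ℝ) - k) * S ^ 2 ≤ ((9:ℝ) - k) * ((k:ℝ) * Q) :=
      mul_le_mul_of_nonneg_left hCS (by linarith)
    have key : 0 < ((27:ℝ) + k) * k * a ^ 2 - 24 * k * a * S + (9 + 3 * k) * S ^ 2 := by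
      nlinarith [sq_nonneg ((k:ℝ) * (27 + k) * a - 12 * k * S), mul_pos hSpos hSpos,
        mul_pos hkpos (mul_pos hSpos hSpos), hsq,
        mul_pos hkpos (by linarith : (0:ℝ) < 27 + (k:ℝ))]
    nlinarith [key, h1, hkpos]
end

section
/- Let (G_i)_{i∈ι} be a family of groups and G = ∗_{i∈ι} G_i their free product, with canonical embeddings of_i : G_i → G. Fix an index i, let g be a non-identity element of the image of of_i, and let a ∈ G. If a⁻¹ g a lies in the image of of_i, then a lies in the image of of_i. -/
open Monoid.CoprodI

private theorem coprodI_word_prod_injective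
    {ι : Type*} (G : ι → Type*) [∀ i, Group (G i)] :
    Function.Injective (Monoid.CoprodI.Word.prod : Word G → Monoid.CoprodI G) := by
  classical
  exact (Monoid.CoprodI.Word.equiv (M := G)).symm.injective

private theorem coprodI_conj_aux
    {ι : Type*} (G : ι → Type*) [∀ i, Group (G i)] {i j k : ι}
    (hij : j ≠ i) (w : NeWord G j k) (x : G i) (hx : x ≠ 1) :
    w.prod⁻¹ * Monoid.CoprodI.of x * w.prod ∉
      (Monoid.CoprodI.of : G i →* Monoid.CoprodI G).range := by
  classical
  rintro ⟨y, hy⟩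
  set N : NeWord G k k :=
    NeWord.append (NeWord.append w.inv hij (NeWord.singleton x hx)) hij.symm w with hN
  have hNprod : N.prod = w.prod⁻¹ * Monoid.CoprodI.of x * w.prod := by
    simp [hN, NeWord.inv_prod, mul_assoc]
  have hlen : 2 ≤ N.toList.length := by
    have h1 := w.inv.toList_ne_nil
    have h2 := w.toList_ne_nil
    have hw1 : 1 ≤ w.inv.toList.length := List.length_pos_iff.2 h1
    have hw2 : 1 ≤ w.toList.length := List.length_pos_iff.2 h2
    simp only [hN, NeWord.toList, List.length_append, List.length_singleton]
    omega
  by_cases hy1 : y = 1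
  · have : N.toWord.prod = Word.prod (Word.empty : Word G) := by
      show N.prod = _
      rw [hNprod, ← hy, hy1, map_one, Word.prod_empty]
    have := coprodI_word_prod_injective G this
    have : N.toList = ([] : List (Σ i, G i)) := congrArg Word.toList this
    exact N.toList_ne_nil this
  · have : N.toWord.prod = (NeWord.singleton y hy1).toWord.prod := by
      show N.prod = (NeWord.singleton y hy1).prod
      rw [hNprod, ← hy, NeWord.prod_singleton]
    have heq := coprodI_word_prod_injective G this
    have hlist : N.toList = [⟨i, y⟩] := congrArg Word.toList heq
    rw [hlist] at hlen
    simp at hlen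

/-- In a free product, if a conjugate `a⁻¹ g a` of a non-trivial element `g`
of a free factor `G i` lies in that same free factor, then the conjugating
element `a` lies in `G i`. -/
theorem coprodI_conj_mem_factor
    {ι : Type*} (G : ι → Type*) [∀ i, Group (G i)] (i : ι)
    (g : Monoid.CoprodI G)
    (hg : g ∈ (Monoid.CoprodI.of : G i →* Monoid.CoprodI G).range)
    (hg1 : g ≠ 1)
    (a : Monoid.CoprodI G)
    (ha : a⁻¹ * g * a ∈ (Monoid.CoprodI.of : G i →* Monoid.CoprodI G).range) :
    a ∈ (Monoid.CoprodI.of : G i →* Monoid.CoprodI G).range := by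
  classical
  obtain ⟨y, rfl⟩ := hg
  have hy1 : y ≠ 1 := fun h => hg1 (by rw [h, map_one])
  set wa : Word G := Word.equiv a with hwa
  set p := Word.equivPair i wa with hp
  have hac : a = Monoid.CoprodI.of p.head * Word.prod p.tail := by
    have h1 : Word.prod wa = a := (Word.equiv (M := G)).symm_apply_apply a
    have h2 : Word.rcons p = wa := (Word.equivPair i).symm_apply_apply wa
    rw [← h1, ← h2, Word.prod_rcons]
  by_cases ht : p.tail = Word.empty
  · rw [ht, Word.prod_empty, mul_one] at hac
    exact ⟨p.head, hac.symm⟩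
  · exfalso
    obtain ⟨j, k, w', hw'⟩ := NeWord.of_word p.tail ht
    have hji : j ≠ i := by
      have hfst : Word.fstIdx p.tail = some j := by
        rw [← hw']
        show (w'.toList.head?).map Sigma.fst = some j
        rw [w'.toList_head?]
        rfl
      intro h
      exact p.fstIdx_ne (h ▸ hfst)
    have hwprod : w'.prod = Word.prod p.tail := by
      rw [NeWord.prod, hw']
    set x : G i := p.head⁻¹ * y * p.head with hx
    have hx1 : x ≠ 1 := by
      intro h
      apply hy1
      have hyx : y = p.head * x * p.head⁻¹ := by rw [hx]; group
      rw [hyx, h, mul_one, mul_inv_cancel]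
    apply coprodI_conj_aux G hji w' x hx1
    obtain ⟨z, hz⟩ := ha
    refine ⟨z, ?_⟩
    rw [hz, hac]
    simp only [hx, map_mul, map_inv, hwprod]
    group
end
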